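/- arXiv:1311.2785 — 2 statements merged into one kernel-verified Lean document; each statement's English description precedes it below -/
import Mathlib

section
/- For every even integer t ≥ 4 with t ≡ 0 (mod 4), the sequence [0, t, t−2, t−4, …, 2, 3, 5, …, t+1, 1] is a linear realization of {1, 2^{t−2}, t^2} on {0,…,t+1} with endpoints 0 and 1 (special of type 2). -/
/-- Multiset of absolute differences of consecutive entries of a list. -/
def pathDiffs (l : List ℕ) : Multiset ℕ :=
  ↑(List.zipWith (fun x y => max x y - min x y) l l.tail)

/-- `l` is a linear realization of the multiset `L`: a permutation of
`{0, …, |L|}` whose multiset of consecutive absolute differences is `L`. -/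
def IsLinReal (L : Multiset ℕ) (l : List ℕ) : Prop :=
  l.Perm (List.range (Multiset.card L + 1)) ∧ pathDiffs l = L

/-- The cyclic edge-length `ℓ(x,y) = min(|x−y|, v−|x−y|)` in `K_v`. -/
def cycLen (v x y : ℕ) : ℕ := min (max x y - min x y) (v - (max x y - min x y))

def cycDiffs (v : ℕ) (l : List ℕ) : Multiset ℕ :=
  ↑(List.zipWith (cycLen v) l l.tail)

/-- `l` is a cyclic realization of `L`: a Hamiltonian path of `K_v` on
`{0, …, v−1}` (with `v = |L|+1`) whose multiset of cyclic edge-lengths is `L`. -/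
def IsCycReal (L : Multiset ℕ) (l : List ℕ) : Prop :=
  l.Perm (List.range (Multiset.card L + 1)) ∧
    cycDiffs (Multiset.card L + 1) l = L

/-- Vertices `a` and `b` are adjacent (consecutive, in either order) in the path `l`. -/
def AdjIn (a b : ℕ) (l : List ℕ) : Prop :=
  [a, b] <:+: l ∨ [b, a] <:+: l

/-- The endpoints of the path `l` are `0` and `1`. -/
def Ends01 (l : List ℕ) : Prop :=
  (l.head? = some 0 ∧ l.getLast? = some 1) ∨
    (l.head? = some 1 ∧ l.getLast? = some 0)

/-! The list runs down the even numbers from `t` to `2` in steps of `2`, steps by `1` to `3`,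
climbs the odd numbers to `t + 1` in steps of `2`, and jumps back to `1`; the two long jumps
`0 → t` and `t + 1 → 1` both have length `t`. Since `t` is even, the two runs together visit
every vertex of `{0, …, t + 1}`, and a list of `t + 2` entries covering all of them is a
permutation. -/

lemma pathDiffs_cons_cons (a b : ℕ) (l : List ℕ) :
    pathDiffs (a :: b :: l) = (max a b - min a b) ::ₘ pathDiffs (b :: l) :=
  rfl

lemma List.map_range_succ_append {α : Type*} (f : ℕ → α) (n : ℕ) (l : List α) :
    (List.range (n + 1)).map f ++ l = f 0 :: ((List.range n).map (fun i => f (i + 1)) ++ l) := by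
  simp [List.range_succ_eq_map, Function.comp_def]

lemma pathDiffs_map_range_append (f : ℕ → ℕ) (d : ℕ) (l : List ℕ) :
    ∀ n, (∀ i < n, max (f i) (f (i + 1)) - min (f i) (f (i + 1)) = d) →
      pathDiffs ((List.range (n + 1)).map f ++ l) =
        Multiset.replicate n d + pathDiffs (f n :: l)
  | 0, _ => by simp
  | n + 1, hf => by
    have ih := pathDiffs_map_range_append (fun i => f (i + 1)) d l n
      (fun i hi => hf (i + 1) (by omega))
    rw [List.map_range_succ_append, List.map_range_succ_append (fun i => f (i + 1)),
      pathDiffs_cons_cons, ← List.map_range_succ_append (fun i => f (i + 1)), ih,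
      hf 0 (by omega), Multiset.replicate_succ, Multiset.cons_add]

lemma perm_range_of_forall_lt_mem {l : List ℕ} {n : ℕ} (hmem : ∀ x < n, x ∈ l)
    (hlen : l.length ≤ n) : l.Perm (List.range n) :=
  ((List.subperm_of_subset List.nodup_range fun x hx => hmem x (List.mem_range.1 hx))
    |>.perm_of_length_le (by simpa using hlen)).symm

lemma pathDiffs_evens_odds (t k : ℕ) (ht : t = 2 * k + 2) :
    pathDiffs ([0] ++ (List.range (k + 1)).map (fun i => t - 2 * i) ++
        (List.range (k + 1)).map (fun i => 3 + 2 * i) ++ [1]) =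
      {1} + Multiset.replicate (t - 2) 2 + Multiset.replicate 2 t := by
  simp only [List.append_assoc, List.cons_append, List.nil_append]
  rw [List.map_range_succ_append (fun i => t - 2 * i), pathDiffs_cons_cons,
    ← List.map_range_succ_append (fun i => t - 2 * i),
    pathDiffs_map_range_append _ 2 _ k (fun i _ => by omega),
    List.map_range_succ_append (fun i => 3 + 2 * i), pathDiffs_cons_cons,
    ← List.map_range_succ_append (fun i => 3 + 2 * i),
    pathDiffs_map_range_append _ 2 _ k (fun i _ => by omega), pathDiffs_cons_cons]
  have hfirst : max 0 (t - 2 * 0) - min 0 (t - 2 * 0) = t := by omega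
  have hmiddle : max (t - 2 * k) (3 + 2 * 0) - min (t - 2 * k) (3 + 2 * 0) = 1 := by omega
  have hlast : max (3 + 2 * k) 1 - min (3 + 2 * k) 1 = t := by omega
  rw [hfirst, hmiddle, hlast, show t - 2 = k + k by omega, Multiset.replicate_add]
  change _ = _ + _ + {t, t}
  simp only [← Multiset.singleton_add, Multiset.insert_eq_cons]
  rw [show pathDiffs [1] = 0 from rfl]
  abel

theorem stmt7 (t : ℕ) (h4 : 4 ≤ t) (hmod : t % 4 = 0) :
    ∃ l : List ℕ,
      l = [0] ++ (List.range (t/2)).map (fun i => t - 2*i) ++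
          (List.range (t/2)).map (fun i => 3 + 2*i) ++ [1] ∧
      IsLinReal ({1} + Multiset.replicate (t-2) 2 + Multiset.replicate 2 t) l ∧
      Ends01 l := by
  obtain ⟨k, hk, ht⟩ : ∃ k, t / 2 = k + 1 ∧ t = 2 * k + 2 :=
    ⟨t / 2 - 1, by omega, by omega⟩
  have hcard : Multiset.card ({1} + Multiset.replicate (t - 2) 2 + Multiset.replicate 2 t) + 1 =
      t + 2 := by
    simp only [Multiset.card_add, Multiset.card_singleton, Multiset.card_replicate]
    omega
  refine ⟨_, rfl, ⟨?_, ?_⟩, Or.inl ⟨rfl, List.getLast?_concat⟩⟩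
  · rw [hcard, hk]
    refine perm_range_of_forall_lt_mem (fun x hx => ?_) ?_
    · simp only [List.mem_append, List.mem_singleton, List.mem_map, List.mem_range]
      rcases Nat.even_or_odd x with ⟨j, rfl⟩ | ⟨j, rfl⟩
      · rcases j with _ | j
        · simp
        · exact Or.inl (Or.inl (Or.inr ⟨k - j, by omega, by omega⟩))
      · rcases j with _ | j
        · simp
        · exact Or.inl (Or.inr ⟨j, by omega, by omega⟩)
    · simp only [List.length_append, List.length_map, List.length_range, List.length_singleton]
      omega
  · rw [hk]
    exact pathDiffs_evens_odds t k ht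
end

section
/- For every even integer t ≥ 6, the sequence [0, t, t+1, t−1, t−3, …, 1, 2, 4, …, t−2] is a linear realization of {1^2, 2^{t−2}, t} on {0,…,t+1} in which t+1 and t are adjacent (special of type 1). -/
/-! For `t = 2k` the sequence is `0, 2k, 2k+1`, then the odd numbers down to `1`, then the even
numbers `2, …, 2k-2` up. It has `2k+2` entries and hits every number below `2k+2`, so it is a
permutation of `{0, …, 2k+1}`. Its differences are `2k` and `1` at the start, `2` along the odd
run, `1` at the turn from `1` to `2`, and `2` along the even run. -/

theorem List.perm_range_of_length_eq_of_forall_lt_mem {l : List ℕ} {n : ℕ}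
    (hlen : l.length = n) (hmem : ∀ x < n, x ∈ l) : l.Perm (List.range n) :=
  have hsub : (List.range n).Subperm l :=
    List.subperm_of_subset List.nodup_range fun x hx => hmem x (List.mem_range.mp hx)
  (hsub.perm_of_length_le (by simp [hlen])).symm

lemma pathDiffs_cons_of_head?_eq (a : ℕ) {l : List ℕ} {b : ℕ} (hb : l.head? = some b) :
    pathDiffs (a :: l) = (max a b - min a b) ::ₘ pathDiffs l := by
  obtain ⟨l, rfl⟩ := List.head?_eq_some_iff.mp hb
  rfl

lemma pathDiffs_append {l₁ l₂ : List ℕ} {a b : ℕ} (ha : l₁.getLast? = some a)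
    (hb : l₂.head? = some b) :
    pathDiffs (l₁ ++ l₂) = pathDiffs l₁ + (max a b - min a b) ::ₘ pathDiffs l₂ := by
  obtain ⟨l₁, rfl⟩ := List.getLast?_eq_some_iff.mp ha
  obtain ⟨l₂, rfl⟩ := List.head?_eq_some_iff.mp hb
  clear ha hb
  induction l₁ with
  | nil => rfl
  | cons x l₁ ih =>
    obtain ⟨c, hc⟩ : ∃ c, (l₁ ++ [a]).head? = some c := by cases l₁ <;> simp
    rw [List.cons_append, List.cons_append, pathDiffs_cons_of_head?_eq x hc,
      pathDiffs_cons_of_head?_eq x (by simpa using hc), ih, Multiset.cons_add]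

lemma pathDiffs_map_range {f : ℕ → ℕ} {d : ℕ} {m : ℕ}
    (hf : ∀ i < m, max (f i) (f (i + 1)) - min (f i) (f (i + 1)) = d) :
    pathDiffs ((List.range (m + 1)).map f) = Multiset.replicate m d := by
  induction m generalizing f with
  | zero => rfl
  | succ m ih =>
    rw [List.range_succ_eq_map, List.map_cons, List.map_map,
      pathDiffs_cons_of_head?_eq (b := f 1) _ (by simp [List.head?_range]),
      ih (f := f ∘ Nat.succ) fun i hi => hf (i + 1) (by omega),
      hf 0 (by omega), Multiset.replicate_succ]

-- The sequence of the theorem for `t = 2 * k`.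
def zigzag (k : ℕ) : List ℕ :=
  [0, 2 * k, 2 * k + 1] ++ (List.range k).map (fun i => 2 * k - 1 - 2 * i) ++
    (List.range (k - 1)).map (fun i => 2 + 2 * i)

lemma length_zigzag {k : ℕ} (hk : 1 ≤ k) : (zigzag k).length = 2 * k + 2 := by
  simp only [zigzag, List.length_append, List.length_cons, List.length_map, List.length_range,
    List.length_nil]
  omega

lemma lt_mem_zigzag (k : ℕ) {x : ℕ} (hx : x < 2 * k + 2) : x ∈ zigzag k := by
  simp only [zigzag, List.mem_append, List.mem_cons, List.mem_map, List.mem_range,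
    List.not_mem_nil, or_false]
  rcases Nat.even_or_odd' x with ⟨r, rfl | rfl⟩
  · by_cases hr : r = 0 ∨ r = k
    · omega
    · exact Or.inr ⟨r - 1, by omega, by omega⟩
  · by_cases hr : r = k
    · omega
    · exact Or.inl (Or.inr ⟨k - 1 - r, by omega, by omega⟩)

lemma zigzag_eq_append (k : ℕ) : zigzag k =
    [0, 2 * k] ++ ((List.range (k + 1)).map (fun i => 2 * k + 1 - 2 * i) ++
      (List.range (k - 1)).map (fun i => 2 + 2 * i)) := by
  have hodd : (List.range (k + 1)).map (fun i => 2 * k + 1 - 2 * i) =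
      (2 * k + 1) :: (List.range k).map (fun i => 2 * k - 1 - 2 * i) := by
    rw [List.range_succ_eq_map, List.map_cons, List.map_map]
    exact congrArg₂ _ rfl (List.map_congr_left fun i _ => by simp only [Function.comp]; omega)
  simp [zigzag, hodd]

lemma pathDiffs_zigzag {k : ℕ} (hk : 2 ≤ k) :
    pathDiffs (zigzag k) =
      Multiset.replicate 2 1 + Multiset.replicate (2 * k - 2) 2 + {2 * k} := by
  obtain ⟨m, rfl⟩ : ∃ m, k = m + 2 := ⟨k - 2, by omega⟩
  rw [zigzag_eq_append, pathDiffs_append (a := 2 * (m + 2)) (b := 2 * (m + 2) + 1) (by simp)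
      (by simp [List.head?_range]),
    pathDiffs_append (a := 1) (b := 2) (by simp [List.getLast?_range])
      (by simp [List.head?_range]),
    pathDiffs_map_range (d := 2) (by omega), show m + 2 - 1 = m + 1 from rfl,
    pathDiffs_map_range (d := 2) (by omega),
    show pathDiffs [0, 2 * (m + 2)] = {2 * (m + 2)} from rfl,
    show max (2 * (m + 2)) (2 * (m + 2) + 1) - min (2 * (m + 2)) (2 * (m + 2) + 1) = 1 by omega,
    show max 1 2 - min 1 2 = 1 from rfl, show 2 * (m + 2) - 2 = (m + 2) + m by omega,
    Multiset.replicate_add (m + 2) m, show Multiset.replicate 2 1 = {1} + {1} from rfl]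
  simp only [← Multiset.singleton_add]
  abel

lemma adjIn_zigzag (k : ℕ) : AdjIn (2 * k + 1) (2 * k) (zigzag k) :=
  Or.inr ⟨[0], (List.range k).map (fun i => 2 * k - 1 - 2 * i) ++
    (List.range (k - 1)).map (fun i => 2 + 2 * i), by simp [zigzag]⟩

theorem stmt16 (t : ℕ) (ht : Even t) (h6 : 6 ≤ t) :
    ∃ l : List ℕ,
      l = [0, t, t+1] ++ (List.range (t/2)).map (fun i => t - 1 - 2*i) ++
          (List.range (t/2 - 1)).map (fun i => 2 + 2*i) ∧
      IsLinReal (Multiset.replicate 2 1 + Multiset.replicate (t-2) 2 + {t}) l ∧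
      AdjIn (t+1) t l := by
  obtain ⟨k, rfl⟩ := ht.two_dvd
  have hk : 2 * k / 2 = k := by omega
  refine ⟨zigzag k, by rw [hk]; rfl, ⟨?_, pathDiffs_zigzag (by omega)⟩, adjIn_zigzag k⟩
  have hcard : Multiset.card
      (Multiset.replicate 2 1 + Multiset.replicate (2 * k - 2) 2 + {2 * k}) + 1 = 2 * k + 2 := by
    simp only [Multiset.card_add, Multiset.card_replicate, Multiset.card_singleton]
    omega
  rw [hcard]
  exact List.perm_range_of_length_eq_of_forall_lt_mem (length_zigzag (by omega))
    fun x hx => lt_mem_zigzag k hx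
end
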